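/- The function h ↦ h·∫_{−1}^{1} (2(h−x)(1−x²))^{−1/2} dx tends to +∞ as h → +∞ (i.e. it tends to the filter atTop along atTop). -/

import Mathlib

/-!
For `h > 1` the integrand factors on `[-1, 1]` as `(2(h - x))^{-1/2} · (1 - x²)^{-1/2}`. The first
factor is at least `(4h)^{-1/2}` there, and the Chebyshev weight `(1 - x²)^{-1/2}` has integral `π`,
so the integral is at least `π / (2√h)` and `h` times it is at least `(π / 2) √h → ∞`.
-/

open MeasureTheory intervalIntegral Filter Set Real Polynomial.Chebyshev

theorem integral_sqrt_one_sub_sq_inv : ∫ x in (-1 : ℝ)..1, √(1 - x ^ 2)⁻¹ = π := by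
  have := integral_measureT_eq_integral_cos (f := fun _ => (1 : ℝ))
  rw [integral_measureT] at this
  simpa using this

theorem integral_inv_sqrt_mul_one_sub_sq {u : ℝ → ℝ} (hu : ∀ x ∈ Icc (-1 : ℝ) 1, 0 ≤ u x) :
    ∫ x in (-1 : ℝ)..1, (√(u x * (1 - x ^ 2)))⁻¹ =
      ∫ x in (-1 : ℝ)..1, (√(u x))⁻¹ * √(1 - x ^ 2)⁻¹ := by
  refine integral_congr fun x hx => ?_
  rw [uIcc_of_le (by norm_num)] at hx
  rw [sqrt_mul (hu x hx), mul_inv, sqrt_inv]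

theorem mul_pi_le_integral_mul_sqrt_one_sub_sq_inv {g : ℝ → ℝ} {c : ℝ}
    (hg : ContinuousOn g (Icc (-1) 1)) (hc : ∀ x ∈ Icc (-1 : ℝ) 1, c ≤ g x) :
    c * π ≤ ∫ x in (-1 : ℝ)..1, g x * √(1 - x ^ 2)⁻¹ := by
  rw [← integral_sqrt_one_sub_sq_inv, ← intervalIntegral.integral_const_mul]
  refine integral_mono_on (by norm_num) (intervalIntegrable_sqrt_one_sub_sq_inv.const_mul c)
    (intervalIntegrable_sqrt_one_sub_sq_inv.continuousOn_mul ?_) fun x hx => ?_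
  · rwa [uIcc_of_le (by norm_num)]
  · exact mul_le_mul_of_nonneg_right (hc x hx) (by positivity)

theorem pi_div_two_sqrt_le_integral_inv_sqrt {h : ℝ} (hh : 1 < h) :
    π / (2 * √h) ≤ ∫ x in (-1 : ℝ)..1, (√(2 * (h - x) * (1 - x ^ 2)))⁻¹ := by
  rw [integral_inv_sqrt_mul_one_sub_sq fun x hx => by linarith [hx.2], div_eq_inv_mul]
  refine mul_pi_le_integral_mul_sqrt_one_sub_sq_inv ?_ fun x hx => ?_
  · refine ContinuousOn.inv₀ (by fun_prop) fun x hx => ?_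
    exact (sqrt_pos.2 (by linarith [hx.2])).ne'
  · have hpos : 0 < 2 * (h - x) := by linarith [hx.2]
    refine inv_anti₀ (sqrt_pos.2 hpos) ((sqrt_le_left (by positivity)).2 ?_)
    nlinarith [sq_sqrt (by linarith : (0 : ℝ) ≤ h), hx.1]

theorem h_times_return_time_tendsto_atTop :
    Tendsto (fun h : ℝ => h * ∫ x in (-1 : ℝ)..1, (Real.sqrt (2 * (h - x) * (1 - x ^ 2)))⁻¹)
      atTop atTop := by
  have hlower : ∀ᶠ h in atTop,
      π / 2 * √h ≤ h * ∫ x in (-1 : ℝ)..1, (√(2 * (h - x) * (1 - x ^ 2)))⁻¹ := by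
    filter_upwards [eventually_gt_atTop 1] with h hh
    have hsqrt : 0 < √h := sqrt_pos.2 (by linarith)
    calc π / 2 * √h = h * (π / (2 * √h)) := by
          field_simp
          rw [sq_sqrt (by linarith)]
      _ ≤ _ := mul_le_mul_of_nonneg_left (pi_div_two_sqrt_le_integral_inv_sqrt hh) (by linarith)
  exact tendsto_atTop_mono' atTop hlower (tendsto_sqrt_atTop.const_mul_atTop (by positivity))
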